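/- Let K and n be positive integers, β ∈ ℝ^K, and for each k let Δ_k : {0,…,n} → ℝ³ be a sequence satisfying ‖Δ_k(t+1) − Δ_k(t)‖ ≤ ε for all k and all 0 ≤ t < n, where ε ≥ 0. Define f(t) = Σ_{k=1}^K β_k Δ_k(t) and d(t) = ‖f(t)‖. Then the empirical variance of d over {0,…,n} satisfies Var_{t∈{0,…,n}}(d(t)) ≤ (n · ε · Σ_{k=1}^K |β_k|)² / 4. -/

import Mathlib

/-!
Each basis displacement moves by at most `ε` per step, so by the triangle inequality the
difference vector `f` moves by at most `ε ∑ k |β k|` per step, and over the clip all values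
`f t` lie within distance `n ε ∑ k |β k|` of each other. Since the norm is 1-Lipschitz, the
distances `d t` then lie in an interval of that length, and Popoviciu's inequality bounds the
variance of values in an interval of length `L` by `L² / 4`: the mean minimizes the mean squared
deviation, and every value is within `L / 2` of the midpoint of the interval.
-/

open Finset

namespace Finset

variable {ι : Type*} (s : Finset ι) (g : ι → ℝ)

noncomputable def empiricalMean : ℝ := (1 / #s) * ∑ i ∈ s, g i

noncomputable def empiricalVariance : ℝ := empiricalMean s fun i => (g i - empiricalMean s g) ^ 2

theorem sum_sq_sub_empiricalMean_add (c : ℝ) :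
    ∑ i ∈ s, (g i - empiricalMean s g) ^ 2 + #s * (empiricalMean s g - c) ^ 2
      = ∑ i ∈ s, (g i - c) ^ 2 := by
  obtain rfl | hs := s.eq_empty_or_nonempty
  · simp
  have hsum : ∑ i ∈ s, g i = #s * empiricalMean s g := by
    have : (#s : ℝ) ≠ 0 := by positivity
    rw [empiricalMean]
    field_simp
  simp only [sub_sq, sum_add_distrib, sum_sub_distrib, ← sum_mul, ← mul_sum, sum_const,
    nsmul_eq_mul, hsum]
  ring

theorem sum_sq_sub_empiricalMean_le (c : ℝ) :
    ∑ i ∈ s, (g i - empiricalMean s g) ^ 2 ≤ ∑ i ∈ s, (g i - c) ^ 2 := by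
  rw [← sum_sq_sub_empiricalMean_add s g c]
  exact le_add_of_nonneg_right (by positivity)

theorem empiricalVariance_le_sq_div_four {D : ℝ} (hD : ∀ i ∈ s, ∀ j ∈ s, g i - g j ≤ D) :
    empiricalVariance s g ≤ D ^ 2 / 4 := by
  obtain rfl | hs := s.eq_empty_or_nonempty
  · simp only [empiricalVariance, empiricalMean, sum_empty, mul_zero]
    positivity
  obtain ⟨a, ha, hmin⟩ := s.exists_min_image g hs
  obtain ⟨b, hb, hmax⟩ := s.exists_max_image g hs
  have hdev : ∀ i ∈ s, (g i - (g a + g b) / 2) ^ 2 ≤ D ^ 2 / 4 := fun i hi => by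
    have hab := hD b hb a ha
    calc (g i - (g a + g b) / 2) ^ 2 ≤ (D / 2) ^ 2 := by
          apply sq_le_sq' <;> linarith [hmin i hi, hmax i hi]
      _ = D ^ 2 / 4 := by ring
  calc empiricalVariance s g
      ≤ (1 / #s) * ∑ i ∈ s, (g i - (g a + g b) / 2) ^ 2 := by
        rw [empiricalVariance, empiricalMean]
        exact mul_le_mul_of_nonneg_left (sum_sq_sub_empiricalMean_le s g _) (by positivity)
    _ ≤ (1 / #s) * (#s • (D ^ 2 / 4)) := by
        gcongr
        exact sum_le_card_nsmul s _ _ hdev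
    _ = D ^ 2 / 4 := by
        have : (#s : ℝ) ≠ 0 := by positivity
        rw [nsmul_eq_mul]
        field_simp

end Finset

theorem norm_sum_smul_sub_sum_smul_le {ι E : Type*} [SeminormedAddCommGroup E] [NormedSpace ℝ E]
    {s : Finset ι} (β : ι → ℝ) {x y : ι → E} {ε : ℝ} (h : ∀ k ∈ s, ‖x k - y k‖ ≤ ε) :
    ‖∑ k ∈ s, β k • x k - ∑ k ∈ s, β k • y k‖ ≤ (∑ k ∈ s, |β k|) * ε := by
  rw [← sum_sub_distrib, sum_mul]
  refine (norm_sum_le _ _).trans (sum_le_sum fun k hk => ?_)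
  rw [← smul_sub, norm_smul, Real.norm_eq_abs]
  exact mul_le_mul_of_nonneg_left (h k hk) (abs_nonneg _)

theorem dist_le_mul_of_forall_dist_succ_le {α : Type*} [PseudoMetricSpace α] {f : ℕ → α}
    {n : ℕ} {E : ℝ} (hE : 0 ≤ E) (hf : ∀ t < n, dist (f t) (f (t + 1)) ≤ E) {s t : ℕ}
    (hs : s ≤ n) (ht : t ≤ n) : dist (f s) (f t) ≤ n * E := by
  wlog hst : s ≤ t generalizing s t
  · rw [dist_comm]
    exact this ht hs (le_of_not_ge hst)
  calc dist (f s) (f t) ≤ ∑ _i ∈ Ico s t, E :=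
        dist_le_Ico_sum_of_dist_le hst fun _ hk => hf _ (hk.trans_le ht)
    _ = (t - s : ℕ) * E := by simp
    _ ≤ n * E := by gcongr; omega

theorem variance_of_distance_le_general
    (K n : ℕ) (β : Fin K → ℝ)
    (Δ : Fin K → ℕ → EuclideanSpace ℝ (Fin 3))
    (ε : ℝ) (hε : 0 ≤ ε)
    (hstep : ∀ k : Fin K, ∀ t < n, ‖Δ k (t + 1) - Δ k t‖ ≤ ε)
    (f : ℕ → EuclideanSpace ℝ (Fin 3))
    (hf : ∀ t, f t = ∑ k : Fin K, β k • Δ k t)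
    (d : ℕ → ℝ) (hd : ∀ t, d t = ‖f t‖) :
    (1 / (n + 1 : ℝ)) *
        ∑ t ∈ range (n + 1),
          (d t - (1 / (n + 1 : ℝ)) * ∑ s ∈ range (n + 1), d s) ^ 2
      ≤ (n * ε * ∑ k : Fin K, |β k|) ^ 2 / 4 := by
  have hf_step : ∀ t < n, dist (f t) (f (t + 1)) ≤ (∑ k, |β k|) * ε := fun t ht => by
    rw [dist_comm, dist_eq_norm, hf, hf]
    exact norm_sum_smul_sub_sum_smul_le β fun k _ => hstep k t ht
  have hd_spread : ∀ s ∈ range (n + 1), ∀ t ∈ range (n + 1),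
      d s - d t ≤ n * ε * ∑ k, |β k| := fun s hs t ht => by
    rw [hd, hd, mul_assoc, mul_comm ε]
    refine (norm_sub_norm_le _ _).trans ?_
    rw [← dist_eq_norm]
    exact dist_le_mul_of_forall_dist_succ_le (by positivity) hf_step
      (Nat.lt_succ_iff.mp (mem_range.mp hs)) (Nat.lt_succ_iff.mp (mem_range.mp ht))
  simpa [empiricalVariance, empiricalMean] using empiricalVariance_le_sq_div_four _ _ hd_spread

/-- Quantitative content of Lemma 1: if each basis displacement `Δ k` changes by
at most `ε` per time step, then the empirical variance of the pairwise distance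
`d t = ‖∑ k, β k • Δ k t‖` over `{0,…,n}` is at most `(n · ε · ∑ k |β k|)² / 4`. -/
theorem variance_of_distance_le
    (K n : ℕ) (hK : 0 < K) (hn : 0 < n) (β : Fin K → ℝ)
    (Δ : Fin K → ℕ → EuclideanSpace ℝ (Fin 3))
    (ε : ℝ) (hε : 0 ≤ ε)
    (hstep : ∀ k : Fin K, ∀ t < n, ‖Δ k (t + 1) - Δ k t‖ ≤ ε)
    (f : ℕ → EuclideanSpace ℝ (Fin 3))
    (hf : ∀ t, f t = ∑ k : Fin K, β k • Δ k t)
    (d : ℕ → ℝ) (hd : ∀ t, d t = ‖f t‖) :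
    (1 / (n + 1 : ℝ)) *
        ∑ t ∈ range (n + 1),
          (d t - (1 / (n + 1 : ℝ)) * ∑ s ∈ range (n + 1), d s) ^ 2
      ≤ (n * ε * ∑ k : Fin K, |β k|) ^ 2 / 4 :=
  variance_of_distance_le_general K n β Δ ε hε hstep f hf d hd
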